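/- Let n ≥ 1 and d = 2^n. For each i ∈ {1,…,n} let {ψ_{i,k}}_{k=1}^4 and {φ_{i,k}}_{k=1}^4 be single-qubit SIC-POVMs (possibly different). Form the tensor-product states ψ_k = ψ_{1,k_1} ⊗ ⋯ ⊗ ψ_{n,k_n} and φ_k = φ_{1,k_1} ⊗ ⋯ ⊗ φ_{n,k_n} for k ∈ {1,…,4}^n, and the d²×d² matrices Γ_ψ = Σ_k (ψ_k ψ_k†)^T ⊗ (ψ_k ψ_k†) and Γ_φ = Σ_k (φ_k φ_k†)^T ⊗ (φ_k φ_k†). Then Γ_ψ = Γ_φ. In particular, the 0-fidelity F₀(E) = (1/d)·Tr(χ Γ) of a process with Choi matrix χ does not depend on the choice of single-qubit SIC-POVMs. -/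

import Mathlib

open Matrix Polynomial
open scoped Kronecker ComplexOrder Classical

noncomputable section

/-- Hermitian inner product on `m → ℂ`, conjugate-linear in the first argument. -/
def cinner {m : Type*} [Fintype m] (v w : m → ℂ) : ℂ :=
  ∑ a, (starRingEnd ℂ) (v a) * w a

/-- A single-qubit SIC-POVM: four unit vectors in ℂ² with pairwise squared overlaps 1/3. -/
def IsSICPOVM (ψ : Fin 4 → Fin 2 → ℂ) : Prop :=
  (∀ k, cinner (ψ k) (ψ k) = 1) ∧
  ∀ k k', k ≠ k' → ‖cinner (ψ k) (ψ k')‖ ^ 2 = 1 / 3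

/-- Tensor product state `ψ_k = ψ_{1,k_1} ⊗ ⋯ ⊗ ψ_{n,k_n}` on `ℂ^(2^n)`,
    whose coordinates are indexed by `Fin n → Fin 2`. -/
def prodState {n : ℕ} (ψ : Fin n → Fin 4 → Fin 2 → ℂ) (k : Fin n → Fin 4) :
    (Fin n → Fin 2) → ℂ :=
  fun x => ∏ i, ψ i (k i) (x i)

/-- The rank-one projector `ψψ†` onto a vector. -/
def proj {m : Type*} (v : m → ℂ) : Matrix m m ℂ :=
  Matrix.vecMulVec v (star v)

/-- The matrix `Γ = Σ_k (ψ_k ψ_k†)ᵀ ⊗ (ψ_k ψ_k†)`. -/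
def Gam {n : ℕ} (ψ : Fin n → Fin 4 → Fin 2 → ℂ) :
    Matrix ((Fin n → Fin 2) × (Fin n → Fin 2)) ((Fin n → Fin 2) × (Fin n → Fin 2)) ℂ :=
  ∑ k : Fin n → Fin 4, (proj (prodState ψ k))ᵀ ⊗ₖ proj (prodState ψ k)

/-- The maximally entangled vector `φ = (1/√d) Σ_x e_x ⊗ e_x`, `d = 2^n`. -/
def maxEnt (n : ℕ) : (Fin n → Fin 2) × (Fin n → Fin 2) → ℂ :=
  fun p => if p.1 = p.2 then (((Real.sqrt (2 ^ n))⁻¹ : ℝ) : ℂ) else 0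

/-! The entry of `Γ` at `((x, y), (x', y'))` is the product over the qubits `i` of the entry at
`((x'ᵢ, yᵢ), (xᵢ, y'ᵢ))` of the fourth moment `Qᵢ = ∑ₖ (ψᵢₖ ⊗ ψᵢₖ)(ψᵢₖ ⊗ ψᵢₖ)†`, so it suffices that
`Qᵢ = (2/3)(1 + SWAP)` for every SIC-POVM. For `N` unit vectors in `ℂᴹ` and `t = N/(M(M+1))`,
`tr (Q - t(1 + SWAP))² = ∑ⱼₖ |⟨ψⱼ, ψₖ⟩|⁴ - 2N²/(M(M+1))`, and a qubit SIC-POVM has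
`∑ⱼₖ |⟨ψⱼ, ψₖ⟩|⁴ = 4 + 12/9 = 2·4²/(2·3)`; a Hermitian matrix with `tr A² = 0` vanishes. -/

section TwoDesign

lemma isHermitian_proj {m : Type*} (v : m → ℂ) : (proj v).IsHermitian := by
  simp [Matrix.IsHermitian, proj, conjTranspose_vecMulVec]

variable {ι m : Type*} [Fintype ι] [Fintype m]

lemma cinner_eq_star_dotProduct (v w : m → ℂ) : cinner v w = star v ⬝ᵥ w := rfl

lemma conj_cinner (v w : m → ℂ) : (starRingEnd ℂ) (cinner v w) = cinner w v := by
  simp [cinner, map_sum, mul_comm]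

lemma cinner_mul_cinner (v w : m → ℂ) :
    cinner v w * cinner w v = ((‖cinner v w‖ ^ 2 : ℝ) : ℂ) := by
  rw [← conj_cinner v w, Complex.mul_conj, Complex.normSq_eq_norm_sq]

lemma trace_proj_mul (v : m → ℂ) (A : Matrix m m ℂ) :
    (proj v * A).trace = cinner v (A *ᵥ v) := by
  rw [trace_mul_comm, proj, mul_vecMulVec, trace_vecMulVec, dotProduct_comm]
  rfl

lemma trace_proj_mul_proj (v w : m → ℂ) :
    (proj v * proj w).trace = cinner v w * cinner w v := by
  rw [trace_proj_mul, proj, vecMulVec_mulVec, cinner_eq_star_dotProduct, dotProduct_smul]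
  simp [cinner_eq_star_dotProduct]

def tensorSquare (v : m → ℂ) : m × m → ℂ := fun p => v p.1 * v p.2

lemma cinner_tensorSquare (v w : m → ℂ) :
    cinner (tensorSquare v) (tensorSquare w) = cinner v w ^ 2 := by
  simp only [cinner, tensorSquare, Fintype.sum_prod_type, sq, Finset.sum_mul_sum, map_mul]
  exact Finset.sum_congr rfl fun _ _ => Finset.sum_congr rfl fun _ _ => by ring

def framePotential (ψ : ι → m → ℂ) : ℝ := ∑ j, ∑ k, ‖cinner (ψ j) (ψ k)‖ ^ 4

def fourthMoment (ψ : ι → m → ℂ) : Matrix (m × m) (m × m) ℂ :=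
  ∑ k, proj (tensorSquare (ψ k))

omit [Fintype m] in
lemma isHermitian_fourthMoment (ψ : ι → m → ℂ) : (fourthMoment ψ).IsHermitian :=
  isSelfAdjoint_sum _ fun _ _ => isHermitian_proj _

lemma trace_fourthMoment_mul_self (ψ : ι → m → ℂ) :
    (fourthMoment ψ * fourthMoment ψ).trace = framePotential ψ := by
  simp only [fourthMoment, framePotential, Finset.sum_mul_sum, trace_sum, trace_proj_mul_proj,
    cinner_tensorSquare, ← mul_pow, cinner_mul_cinner]
  push_cast
  simp only [← pow_mul]

variable [DecidableEq m]

def swapMatrix : Matrix (m × m) (m × m) ℂ := Equiv.Perm.permMatrix ℂ (Equiv.prodComm m m)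

lemma swapMatrix_mul_self : (swapMatrix * swapMatrix : Matrix (m × m) (m × m) ℂ) = 1 := by
  rw [swapMatrix, ← permMatrix_mul]
  convert permMatrix_one
  ext <;> rfl

lemma trace_swapMatrix : (swapMatrix : Matrix (m × m) (m × m) ℂ).trace = Fintype.card m := by
  simp only [trace, diag, swapMatrix, PEquiv.toMatrix_apply, Equiv.toPEquiv_apply, Option.mem_def,
    Option.some.injEq, Fintype.sum_prod_type, Equiv.prodComm_apply, Prod.swap, Prod.mk.injEq]
  simp [and_iff_left_of_imp Eq.symm]

omit [Fintype m] in
lemma isHermitian_swapMatrix : (swapMatrix : Matrix (m × m) (m × m) ℂ).IsHermitian := by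
  rw [Matrix.IsHermitian, swapMatrix, conjTranspose_permMatrix]
  rfl

lemma swapMatrix_mulVec_tensorSquare (v : m → ℂ) :
    swapMatrix *ᵥ tensorSquare v = tensorSquare v := by
  rw [swapMatrix, permMatrix_mulVec]
  ext p
  exact mul_comm _ _

/-- Twice the projector onto the symmetric subspace of `ℂᵐ ⊗ ℂᵐ`. -/
def symmetrizer : Matrix (m × m) (m × m) ℂ := 1 + swapMatrix

omit [Fintype m] in
lemma isHermitian_symmetrizer : (symmetrizer : Matrix (m × m) (m × m) ℂ).IsHermitian :=
  isHermitian_one.add isHermitian_swapMatrix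

lemma symmetrizer_mulVec_tensorSquare (v : m → ℂ) :
    symmetrizer *ᵥ tensorSquare v = (2 : ℂ) • tensorSquare v := by
  rw [symmetrizer, add_mulVec, one_mulVec, swapMatrix_mulVec_tensorSquare, two_smul]

lemma symmetrizer_mul_self :
    (symmetrizer * symmetrizer : Matrix (m × m) (m × m) ℂ) = (2 : ℂ) • symmetrizer := by
  simp only [symmetrizer, add_mul, mul_add, one_mul, mul_one, swapMatrix_mul_self, two_smul]
  abel

lemma trace_symmetrizer_mul_self :
    (symmetrizer * symmetrizer : Matrix (m × m) (m × m) ℂ).trace =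
      2 * (Fintype.card m ^ 2 + Fintype.card m) := by
  rw [symmetrizer_mul_self, trace_smul, symmetrizer, trace_add, trace_one, trace_swapMatrix,
    Fintype.card_prod, smul_eq_mul]
  push_cast
  ring

lemma trace_fourthMoment_mul_symmetrizer (ψ : ι → m → ℂ) :
    (fourthMoment ψ * symmetrizer).trace = 2 * ∑ k, cinner (ψ k) (ψ k) ^ 2 := by
  simp only [fourthMoment, Finset.sum_mul, trace_sum, trace_proj_mul,
    symmetrizer_mulVec_tensorSquare, Finset.mul_sum]
  refine Finset.sum_congr rfl fun k _ => ?_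
  rw [cinner_eq_star_dotProduct, dotProduct_smul, ← cinner_eq_star_dotProduct,
    cinner_tensorSquare, smul_eq_mul]

/-- Equality case of the Welch bound `∑ⱼₖ |⟨ψⱼ, ψₖ⟩|⁴ ≥ 2N²/(M(M+1))` for `N` unit vectors in
`ℂᴹ`: a family attaining it is a projective 2-design. -/
theorem fourthMoment_eq_smul_symmetrizer {ψ : ι → m → ℂ} (hunit : ∀ k, cinner (ψ k) (ψ k) = 1)
    (hψ : framePotential ψ =
      2 * Fintype.card ι ^ 2 / (Fintype.card m * (Fintype.card m + 1))) :
    fourthMoment ψ =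
      ((Fintype.card ι : ℂ) / (Fintype.card m * (Fintype.card m + 1))) • symmetrizer := by
  set N : ℂ := (Fintype.card ι : ℂ)
  set M : ℂ := (Fintype.card m : ℂ)
  set t : ℂ := N / (M * (M + 1))
  set D := fourthMoment ψ - t • symmetrizer
  have hD : D.IsHermitian := by
    refine (isHermitian_fourthMoment ψ).sub (IsSelfAdjoint.smul ?_ isHermitian_symmetrizer)
    simp [t, N, M, IsSelfAdjoint]
  have hN : ∑ k, cinner (ψ k) (ψ k) ^ 2 = N := by simp [hunit, N]
  have hFP : (framePotential ψ : ℂ) = 2 * N ^ 2 / (M * (M + 1)) := by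
    rw [hψ]
    push_cast
    rfl
  have htrace : (Dᴴ * D).trace = 0 := by
    rw [hD.eq]
    simp only [D, sub_mul, mul_sub, Matrix.smul_mul, Matrix.mul_smul, trace_sub, trace_smul,
      smul_eq_mul, trace_fourthMoment_mul_self, trace_mul_comm symmetrizer (fourthMoment ψ),
      trace_fourthMoment_mul_symmetrizer, trace_symmetrizer_mul_self, hN, hFP]
    rcases eq_or_ne M 0 with hM | hM
    · simp [t, hM]
    · have : M + 1 ≠ 0 := by positivity
      simp only [t, show (Fintype.card m : ℂ) = M from rfl]
      field_simp
      ring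
  exact sub_eq_zero.mp (trace_conjTranspose_mul_self_eq_zero_iff.mp htrace)

end TwoDesign

lemma IsSICPOVM.framePotential_eq {ψ : Fin 4 → Fin 2 → ℂ} (h : IsSICPOVM ψ) :
    framePotential ψ = 16 / 3 := by
  have hovl : ∀ j k, ‖cinner (ψ j) (ψ k)‖ ^ 4 = if j = k then 1 else 1 / 9 := by
    intro j k
    split_ifs with hjk
    · simp [hjk, h.1 k]
    · rw [show 4 = 2 * 2 from rfl, pow_mul, h.2 j k hjk]
      norm_num
  simp only [framePotential, hovl, Fin.sum_univ_four, Fin.reduceEq, if_true, if_false]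
  norm_num

lemma IsSICPOVM.fourthMoment_eq {ψ : Fin 4 → Fin 2 → ℂ} (h : IsSICPOVM ψ) :
    fourthMoment ψ = (2 / 3 : ℂ) • symmetrizer := by
  rw [fourthMoment_eq_smul_symmetrizer h.1 (by rw [h.framePotential_eq]; norm_num)]
  norm_num

lemma Gam_apply {n : ℕ} (ψ : Fin n → Fin 4 → Fin 2 → ℂ)
    (p q : (Fin n → Fin 2) × (Fin n → Fin 2)) :
    Gam ψ p q = ∏ i, fourthMoment (ψ i) (q.1 i, p.2 i) (p.1 i, q.2 i) := by
  simp only [Gam, fourthMoment, Matrix.sum_apply, kroneckerMap_apply, transpose_apply, proj,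
    vecMulVec_apply, prodState, tensorSquare, Pi.star_apply, star_prod, Fintype.prod_sum,
    ← Finset.prod_mul_distrib]
  exact Finset.sum_congr rfl fun k _ => Finset.prod_congr rfl fun i _ => by rw [star_mul]; ring

lemma Gam_congr {n : ℕ} {ψ φ : Fin n → Fin 4 → Fin 2 → ℂ}
    (h : ∀ i, fourthMoment (ψ i) = fourthMoment (φ i)) : Gam ψ = Gam φ := by
  ext p q
  simp only [Gam_apply, h]

theorem Gam_independent_of_sic_general (n : ℕ)
    (ψ φ' : Fin n → Fin 4 → Fin 2 → ℂ)
    (hψ : ∀ i, IsSICPOVM (ψ i)) (hφ' : ∀ i, IsSICPOVM (φ' i)) :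
    Gam ψ = Gam φ' ∧
      ∀ χ : Matrix ((Fin n → Fin 2) × (Fin n → Fin 2)) ((Fin n → Fin 2) × (Fin n → Fin 2)) ℂ,
        ((2 : ℂ) ^ n)⁻¹ * (χ * Gam ψ).trace = ((2 : ℂ) ^ n)⁻¹ * (χ * Gam φ').trace := by
  have hG : Gam ψ = Gam φ' :=
    Gam_congr fun i => (hψ i).fourthMoment_eq.trans (hφ' i).fourthMoment_eq.symm
  exact ⟨hG, fun χ => by rw [hG]⟩

/-- `Γ` does not depend on the choice of single-qubit SIC-POVMs; in particular the
    0-fidelity `(1/d)·Tr(χΓ)` is independent of this choice. -/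
theorem Gam_independent_of_sic (n : ℕ) (hn : 1 ≤ n)
    (ψ φ' : Fin n → Fin 4 → Fin 2 → ℂ)
    (hψ : ∀ i, IsSICPOVM (ψ i)) (hφ' : ∀ i, IsSICPOVM (φ' i)) :
    Gam ψ = Gam φ' ∧
      ∀ χ : Matrix ((Fin n → Fin 2) × (Fin n → Fin 2)) ((Fin n → Fin 2) × (Fin n → Fin 2)) ℂ,
        ((2 : ℂ) ^ n)⁻¹ * (χ * Gam ψ).trace = ((2 : ℂ) ^ n)⁻¹ * (χ * Gam φ').trace :=
  Gam_independent_of_sic_general n ψ φ' hψ hφ'
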